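/- Consider a three-agent instance that contains no (2/3)-high-valued good (v_a(g) < (2/3)·MMS_a for every agent a and good g) and in which no subset of whole goods is a reducible bundle with respect to any agent, and let M̂ = {g ∈ M : v_a(g) > MMS_a/3 for every agent a}. Then every agent regards at most three goods of M̂ as indivisible; consequently, some good in M̂ is regarded as divisible by at least two of the three agents. -/
import Mathlib


open scoped BigOperators Classical

/-- An instance of fair division with subjective divisibility: `n` agents and `m` goods,
each good of total amount 1.  Each agent `i` assigns a nonnegative value `v i g` to each
good `g` and regards each good as either divisible or indivisible for her. -/
structure FairDivision (n m : ℕ) where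
  /-- agent `i`'s value for good `g` -/
  v : Fin n → Fin m → ℝ
  v_nonneg : ∀ i g, 0 ≤ v i g
  /-- `divisible i g` means agent `i` regards good `g` as divisible -/
  divisible : Fin n → Fin m → Prop

namespace FairDivision

variable {n m : ℕ}

/-- Agent `i`'s utility from receiving fraction `t ∈ [0,1]` of good `g`:
`t * v i g` if `g` is divisible for `i`; `v i g` if `g` is indivisible for `i` and `t = 1`;
and `0` if `g` is indivisible for `i` and `t < 1`. -/
noncomputable def frUtil (I : FairDivision n m) (i : Fin n) (g : Fin m) (t : ℝ) : ℝ :=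
  if I.divisible i g then t * I.v i g else if t = 1 then I.v i g else 0

/-- Agent `i`'s (additive) utility for a bundle `b`, given by the fraction `b g` of each good. -/
noncomputable def util (I : FairDivision n m) (i : Fin n) (b : Fin m → ℝ) : ℝ :=
  ∑ g, I.frUtil i g (b g)

/-- Agent `i`'s utility for the bundle `b` with good `g` omitted. -/
noncomputable def utilMinus (I : FairDivision n m) (i : Fin n) (b : Fin m → ℝ) (g : Fin m) : ℝ :=
  ∑ g' ∈ Finset.univ.erase g, I.frUtil i g' (b g')

/-- A complete allocation: fractions in `[0,1]` summing to `1` for every good. -/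
def IsAllocation (I : FairDivision n m) (x : Fin n → Fin m → ℝ) : Prop :=
  (∀ i g, 0 ≤ x i g ∧ x i g ≤ 1) ∧ ∀ g, ∑ i, x i g = 1

/-- A partial allocation: fractions in `[0,1]` summing to at most `1` for every good. -/
def IsPartialAllocation (I : FairDivision n m) (x : Fin n → Fin m → ℝ) : Prop :=
  (∀ i g, 0 ≤ x i g ∧ x i g ≤ 1) ∧ ∀ g, ∑ i, x i g ≤ 1

/-- The maximin share of agent `i`: the supremum, over all fractional `n`-partitions
`P` of the goods, of the minimum over the parts `P j` of agent `i`'s utility. -/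
noncomputable def MMS (I : FairDivision n m) (i : Fin n) : ℝ :=
  sSup { r : ℝ | ∃ P : Fin n → Fin m → ℝ, I.IsAllocation P ∧ r = ⨅ j, I.util i (P j) }

/-- Non-wastefulness: every positive fraction an agent receives yields her positive utility. -/
def NonWasteful (I : FairDivision n m) (x : Fin n → Fin m → ℝ) : Prop :=
  ∀ i g, 0 < x i g → 0 < I.frUtil i g (x i g)

/-- Envy-freeness. -/
def EF (I : FairDivision n m) (x : Fin n → Fin m → ℝ) : Prop :=
  ∀ i j, I.util i (x j) ≤ I.util i (x i)

/-- Envy-freeness for mixed goods: for all agents `i, j`, if every good `j` receives a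
positive fraction of is indivisible for `i`, then `i` does not envy `j` after removing some
such good from `j`'s bundle; otherwise `i` does not envy `j`. -/
def EFM (I : FairDivision n m) (x : Fin n → Fin m → ℝ) : Prop :=
  ∀ i j,
    ((∀ g, 0 < x j g → ¬ I.divisible i g) →
      ∃ g, 0 < x j g ∧ I.utilMinus i (x j) g ≤ I.util i (x i)) ∧
    ((¬ ∀ g, 0 < x j g → ¬ I.divisible i g) → I.util i (x j) ≤ I.util i (x i))

/-- EFXM: as EFM, but the envy must vanish after removing any positively valued such good. -/
def EFXM (I : FairDivision n m) (x : Fin n → Fin m → ℝ) : Prop :=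
  ∀ i j,
    ((∀ g, 0 < x j g → ¬ I.divisible i g) →
      ∀ g, 0 < x j g → 0 < I.v i g → I.utilMinus i (x j) g ≤ I.util i (x i)) ∧
    ((¬ ∀ g, 0 < x j g → ¬ I.divisible i g) → I.util i (x j) ≤ I.util i (x i))

/-- EF1M: if `j`'s bundle contains (a positive fraction of) some good that `i` regards as
indivisible and values positively, the envy of `i` must vanish after removing some such good;
otherwise `i` does not envy `j`. -/
def EF1M (I : FairDivision n m) (x : Fin n → Fin m → ℝ) : Prop :=
  ∀ i j,
    ((∃ g, 0 < x j g ∧ ¬ I.divisible i g ∧ 0 < I.v i g) →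
      ∃ g, 0 < x j g ∧ ¬ I.divisible i g ∧ 0 < I.v i g ∧
        I.utilMinus i (x j) g ≤ I.util i (x i)) ∧
    ((¬ ∃ g, 0 < x j g ∧ ¬ I.divisible i g ∧ 0 < I.v i g) → I.util i (x j) ≤ I.util i (x i))

/-- Pareto optimality (among complete allocations). -/
def ParetoOptimal (I : FairDivision n m) (x : Fin n → Fin m → ℝ) : Prop :=
  ¬ ∃ y, I.IsAllocation y ∧ (∀ i, I.util i (x i) ≤ I.util i (y i)) ∧
    ∃ i, I.util i (x i) < I.util i (y i)

/-- In a 3-agent instance, `B` (a set of whole goods) is a reducible bundle with respect to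
agent `i`: `u_i(B) ≥ (2/3)·MMS_i`, `u_j(M∖B) ≥ 2·MMS_j` for some agent `j ≠ i`, and
`u_k(M∖B) ≥ (4/3)·MMS_k` for the remaining agent `k`. -/
def IsReducible (I : FairDivision 3 m) (B : Finset (Fin m)) (i : Fin 3) : Prop :=
  2 / 3 * I.MMS i ≤ ∑ g ∈ B, I.v i g ∧
    ∃ j, j ≠ i ∧ 2 * I.MMS j ≤ ∑ g ∈ Bᶜ, I.v j g ∧
      ∀ k, k ≠ i → k ≠ j → 4 / 3 * I.MMS k ≤ ∑ g ∈ Bᶜ, I.v k g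

end FairDivision



namespace FairDivision

variable {m : ℕ}
-- ###### auxiliary lemmas ######

lemma frUtil_nonneg (I : FairDivision n m) (i : Fin n) (g : Fin m) {t : ℝ} (ht : 0 ≤ t) :
    0 ≤ I.frUtil i g t := by
  unfold frUtil
  split_ifs with h1 h2
  · exact mul_nonneg ht (I.v_nonneg i g)
  · exact I.v_nonneg i g
  · exact le_refl 0

lemma frUtil_one (I : FairDivision n m) (i : Fin n) (g : Fin m) :
    I.frUtil i g 1 = I.v i g := by
  unfold frUtil; split_ifs with h1 h2 <;> simp_all

lemma sum3_util_le (I : FairDivision 3 m) (a : Fin 3) (P : Fin 3 → Fin m → ℝ)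
    (hP : I.IsAllocation P) :
    ∑ j, I.util a (P j) ≤ ∑ g, I.v a g := by
  unfold util
  rw [Finset.sum_comm]
  apply Finset.sum_le_sum
  intro g _
  have hsum := hP.2 g
  rw [Fin.sum_univ_three] at hsum ⊢
  have h0 := hP.1 0 g; have h1 := hP.1 1 g; have h2 := hP.1 2 g
  have hv := I.v_nonneg a g
  unfold frUtil
  split_ifs <;> nlinarith

lemma inf_util_le (I : FairDivision 3 m) (a : Fin 3) (P : Fin 3 → Fin m → ℝ) (j : Fin 3) :
    (⨅ j, I.util a (P j)) ≤ I.util a (P j) :=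
  ciInf_le (Set.finite_range _).bddBelow j

lemma total_ge_mms (I : FairDivision 3 m) (a : Fin 3) :
    3 * I.MMS a ≤ ∑ g, I.v a g := by
  have hT : (0:ℝ) ≤ ∑ g, I.v a g := Finset.sum_nonneg fun g _ => I.v_nonneg a g
  have : I.MMS a ≤ (∑ g, I.v a g) / 3 := by
    apply Real.sSup_le _ (by linarith)
    rintro x ⟨P, hP, rfl⟩
    have h0 := I.inf_util_le a P 0
    have h1 := I.inf_util_le a P 1
    have h2 := I.inf_util_le a P 2
    have hs := I.sum3_util_le a P hP
    rw [Fin.sum_univ_three] at hs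
    linarith
  linarith

lemma mms_pos (I : FairDivision 3 m)
    (hNoRed : ∀ (B : Finset (Fin m)) (i : Fin 3), ¬ I.IsReducible B i) (i : Fin 3) :
    0 < I.MMS i := by
  by_contra h
  push_neg at h
  apply hNoRed ∅ i
  refine ⟨by simp; linarith, ?_⟩
  have key : ∀ j : Fin 3, 2 * I.MMS j ≤ ∑ g ∈ (∅ : Finset (Fin m))ᶜ, I.v j g := by
    intro j
    have h1 : ∑ g ∈ (∅ : Finset (Fin m))ᶜ, I.v j g = ∑ g, I.v j g := by simp
    have h2 := I.total_ge_mms j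
    have h3 : (0:ℝ) ≤ ∑ g, I.v j g := Finset.sum_nonneg fun g _ => I.v_nonneg j g
    rcases le_or_gt 0 (I.MMS j) with hc | hc <;> rw [h1] <;> linarith
  refine ⟨if i = 0 then 1 else 0, ?_, key _, ?_⟩
  · split_ifs with hh
    · subst hh; decide
    · exact Ne.symm hh
  · intro k _ _
    have := key k
    have h2 := I.total_ge_mms k
    have h1 : ∑ g ∈ (∅ : Finset (Fin m))ᶜ, I.v k g = ∑ g, I.v k g := by simp
    have h3 : (0:ℝ) ≤ ∑ g, I.v k g := Finset.sum_nonneg fun g _ => I.v_nonneg k g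
    rw [h1]
    rcases le_or_gt 0 (I.MMS k) with hc | hc <;> linarith


/-- A bundle is small if every agent values it strictly below `2/3` of her MMS. -/
def SmallB (I : FairDivision 3 m) (B : Finset (Fin m)) : Prop :=
  ∀ b : Fin 3, ∑ g ∈ B, I.v b g < 2 / 3 * I.MMS b

lemma small_empty (I : FairDivision 3 m)
    (hpos : ∀ b, 0 < I.MMS b) : I.SmallB ∅ := by
  intro b; simp; linarith [hpos b]

lemma small_singleton (I : FairDivision 3 m)
    (hNoHigh : ∀ a g, I.v a g < 2 / 3 * I.MMS a) (g : Fin m) : I.SmallB {g} := by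
  intro b; simpa using hNoHigh b g

lemma exists_minimal_nonsmall (I : FairDivision 3 m) (S : Finset (Fin m))
    (hS : ¬ I.SmallB S) :
    ∃ B ⊆ S, ¬ I.SmallB B ∧ ∀ g ∈ B, I.SmallB (B.erase g) := by
  classical
  set 𝒯 : Finset (Finset (Fin m)) := S.powerset.filter (fun B => ¬ I.SmallB B) with h𝒯
  have hne : 𝒯.Nonempty := ⟨S, by simp [h𝒯, hS]⟩
  obtain ⟨B, hB, hmin⟩ := 𝒯.exists_min_image Finset.card hne
  rw [h𝒯, Finset.mem_filter, Finset.mem_powerset] at hB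
  refine ⟨B, hB.1, hB.2, ?_⟩
  intro g hg
  by_contra hcon
  have hmem : B.erase g ∈ 𝒯 := by
    rw [h𝒯, Finset.mem_filter, Finset.mem_powerset]
    exact ⟨(B.erase_subset g).trans hB.1, hcon⟩
  have := hmin _ hmem
  have hlt : (B.erase g).card < B.card := Finset.card_erase_lt_of_mem hg
  omega

/-- Frontier lemma: a minimal non-small bundle is valued above `T_b - 2 MMS_b` by every
agent, and each of its goods is valued above `MMS_b / 3` by every agent. -/
lemma frontier (I : FairDivision 3 m)
    (hNoHigh : ∀ a g, I.v a g < 2 / 3 * I.MMS a)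
    (hNoRed : ∀ (B : Finset (Fin m)) (i : Fin 3), ¬ I.IsReducible B i)
    (B : Finset (Fin m)) (hB : ¬ I.SmallB B) (hmin : ∀ g ∈ B, I.SmallB (B.erase g)) :
    (∀ b : Fin 3, (∑ g, I.v b g) - 2 * I.MMS b < ∑ g ∈ B, I.v b g) ∧
    (∀ g ∈ B, ∀ b : Fin 3, I.MMS b / 3 < I.v b g) := by
  have hpos : ∀ b, 0 < I.MMS b := I.mms_pos hNoRed
  have hTot : ∀ b, 3 * I.MMS b ≤ ∑ g, I.v b g := I.total_ge_mms
  have hBne : B.Nonempty := by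
    rcases B.eq_empty_or_nonempty with rfl | h
    · exact absurd (I.small_empty hpos) hB
    · exact h
  obtain ⟨g₀, hg₀⟩ := hBne
  -- upper bound: every agent values B below 4/3 MMS
  have hupper : ∀ b : Fin 3, ∑ g ∈ B, I.v b g < 4 / 3 * I.MMS b := by
    intro b
    have h1 : I.v b g₀ + ∑ g ∈ B.erase g₀, I.v b g = ∑ g ∈ B, I.v b g :=
      Finset.add_sum_erase B _ hg₀
    have h2 := hmin g₀ hg₀ b
    have h3 := hNoHigh b g₀
    linarith
  -- step 1
  have step1 : ∀ i : Fin 3, 2 / 3 * I.MMS i ≤ ∑ g ∈ B, I.v i g →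
      ∀ j : Fin 3, j ≠ i → (∑ g, I.v j g) - 2 * I.MMS j < ∑ g ∈ B, I.v j g := by
    intro i hi j hji
    by_contra hcon
    push_neg at hcon
    apply hNoRed B i
    refine ⟨hi, j, hji, ?_, ?_⟩
    · have hc : ∑ g ∈ B, I.v j g + ∑ g ∈ Bᶜ, I.v j g = ∑ g, I.v j g :=
        Finset.sum_add_sum_compl B _
      linarith
    · intro k hki hkj
      have hc : ∑ g ∈ B, I.v k g + ∑ g ∈ Bᶜ, I.v k g = ∑ g, I.v k g :=
        Finset.sum_add_sum_compl B _
      have := hupper k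
      have := hTot k
      have := hpos k
      linarith
  -- get a crossing agent
  have hex : ∃ i : Fin 3, 2 / 3 * I.MMS i ≤ ∑ g ∈ B, I.v i g := by
    by_contra hcon
    push_neg at hcon
    exact hB fun b => hcon b
  obtain ⟨i, hi⟩ := hex
  set j : Fin 3 := if i = 0 then 1 else 0 with hj
  have hji : j ≠ i := by
    rw [hj]; split_ifs with hh
    · subst hh; decide
    · exact Ne.symm hh
  have hjbig := step1 i hi j hji
  have hjge : 2 / 3 * I.MMS j ≤ ∑ g ∈ B, I.v j g := by
    have := hTot j; have := hpos j; linarith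
  have hall : ∀ b : Fin 3, (∑ g, I.v b g) - 2 * I.MMS b < ∑ g ∈ B, I.v b g := by
    intro b
    rcases eq_or_ne b j with rfl | hbj
    · exact hjbig
    · rcases eq_or_ne b i with rfl | hbi
      · exact step1 j hjge b hji.symm
      · exact step1 i hi b hbi
  refine ⟨hall, ?_⟩
  intro g hg b
  have h1 : I.v b g + ∑ g' ∈ B.erase g, I.v b g' = ∑ g' ∈ B, I.v b g' :=
    Finset.add_sum_erase B _ hg
  have h2 := hmin g hg b
  have h3 := hall b
  have h4 := hTot b
  linarith

/-- Pair lemma: any two distinct goods valued above `MMS/3` by every agent together are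
valued above `T_b - 2 MMS_b` by every agent. -/
lemma pair_big (I : FairDivision 3 m)
    (hNoHigh : ∀ a g, I.v a g < 2 / 3 * I.MMS a)
    (hNoRed : ∀ (B : Finset (Fin m)) (i : Fin 3), ¬ I.IsReducible B i)
    {g g' : Fin m} (hne : g ≠ g')
    (hg : ∀ b : Fin 3, I.MMS b / 3 < I.v b g) (hg' : ∀ b : Fin 3, I.MMS b / 3 < I.v b g') :
    ∀ b : Fin 3, (∑ x, I.v b x) - 2 * I.MMS b < I.v b g + I.v b g' := by
  have hpair : ∀ b : Fin 3, ∑ x ∈ ({g, g'} : Finset (Fin m)), I.v b x = I.v b g + I.v b g' :=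
    fun b => Finset.sum_pair hne
  have hB : ¬ I.SmallB {g, g'} := by
    intro hs
    have := hs 0
    rw [hpair 0] at this
    have := hg 0; have := hg' 0
    linarith
  have hmin : ∀ x ∈ ({g, g'} : Finset (Fin m)), I.SmallB (({g, g'} : Finset (Fin m)).erase x) := by
    intro x hx
    rcases Finset.mem_insert.mp hx with rfl | hx'
    · rw [Finset.erase_insert (by simpa using hne)]
      exact I.small_singleton hNoHigh g'
    · rcases Finset.mem_singleton.mp hx' with rfl
      rw [Finset.pair_comm, Finset.erase_insert (by simpa using hne.symm)]
      exact I.small_singleton hNoHigh g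
  have := (I.frontier hNoHigh hNoRed _ hB hmin).1
  intro b
  have hb := this b
  rwa [hpair b] at hb


lemma good_bound (I : FairDivision 3 m) (a : Fin 3) (P : Fin 3 → Fin m → ℝ)
    (hP : I.IsAllocation P) (g : Fin m) :
    ∑ j, I.frUtil a g (P j g) ≤ I.v a g := by
  have hsum := hP.2 g
  rw [Fin.sum_univ_three] at hsum ⊢
  have h0 := hP.1 0 g; have h1 := hP.1 1 g; have h2 := hP.1 2 g
  have hv := I.v_nonneg a g
  unfold frUtil
  split_ifs <;> nlinarith

lemma split_bound (I : FairDivision 3 m) (a : Fin 3) (g : Fin m)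
    (hind : ¬ I.divisible a g) (P : Fin 3 → Fin m → ℝ) (hP : I.IsAllocation P)
    (hne1 : ∀ j, P j g ≠ 1) :
    ∑ j, I.util a (P j) ≤ (∑ g', I.v a g') - I.v a g := by
  unfold util
  rw [Finset.sum_comm]
  have hzero : ∑ j, I.frUtil a g (P j g) = 0 := by
    apply Finset.sum_eq_zero
    intro j _
    unfold frUtil
    simp [hind, hne1 j]
  have hkey : (∑ j, I.frUtil a g (P j g)) + ∑ g' ∈ Finset.univ.erase g,
      (∑ j, I.frUtil a g' (P j g')) = ∑ g', ∑ j, I.frUtil a g' (P j g') :=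
    Finset.add_sum_erase Finset.univ (fun g' => ∑ j, I.frUtil a g' (P j g')) (Finset.mem_univ g)
  have hv : I.v a g + ∑ g' ∈ Finset.univ.erase g, I.v a g' = ∑ g', I.v a g' :=
    Finset.add_sum_erase _ _ (Finset.mem_univ g)
  have hle : ∑ g' ∈ Finset.univ.erase g, (∑ j, I.frUtil a g' (P j g')) ≤
      ∑ g' ∈ Finset.univ.erase g, I.v a g' :=
    Finset.sum_le_sum fun g' _ => I.good_bound a P hP g'
  linarith

lemma pair_whole (I : FairDivision 3 m) (a : Fin 3) {g g' : Fin m} (hne : g ≠ g')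
    (P : Fin 3 → Fin m → ℝ) (hP : I.IsAllocation P) (js : Fin 3)
    (h1 : P js g = 1) (h2 : P js g' = 1) :
    I.v a g + I.v a g' ≤ I.util a (P js) := by
  unfold util
  have hsub : ∑ x ∈ ({g, g'} : Finset (Fin m)), I.frUtil a x (P js x) ≤
      ∑ x, I.frUtil a x (P js x) := by
    apply Finset.sum_le_sum_of_subset_of_nonneg (Finset.subset_univ _)
    intro x _ _
    exact I.frUtil_nonneg a x (hP.1 js x).1
  rw [Finset.sum_pair hne, h1, h2, I.frUtil_one, I.frUtil_one] at hsub
  exact hsub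

/-- Partition bound: with four distinct indivisible goods, every partition's min utility is
bounded by an explicit constant. -/
lemma inf_le_C (I : FairDivision 3 m) (a : Fin 3) {g1 g2 g3 g4 : Fin m}
    (h12 : g1 ≠ g2) (h13 : g1 ≠ g3) (h14 : g1 ≠ g4)
    (h23 : g2 ≠ g3) (h24 : g2 ≠ g4) (h34 : g3 ≠ g4)
    (hi1 : ¬ I.divisible a g1) (hi2 : ¬ I.divisible a g2)
    (hi3 : ¬ I.divisible a g3) (hi4 : ¬ I.divisible a g4)
    (P : Fin 3 → Fin m → ℝ) (hP : I.IsAllocation P) :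
    (⨅ j, I.util a (P j)) ≤
      max (((∑ x, I.v a x) - min (min (I.v a g1) (I.v a g2)) (min (I.v a g3) (I.v a g4))) / 3)
        (((∑ x, I.v a x) - min (I.v a g1 + I.v a g2) (min (I.v a g1 + I.v a g3)
          (min (I.v a g1 + I.v a g4) (min (I.v a g2 + I.v a g3)
            (min (I.v a g2 + I.v a g4) (I.v a g3 + I.v a g4)))))) / 2) := by
  set T := ∑ x, I.v a x with hT
  set q1 := I.v a g1; set q2 := I.v a g2; set q3 := I.v a g3; set q4 := I.v a g4
  set m4 := min (min q1 q2) (min q3 q4) with hm4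
  set s := min (q1 + q2) (min (q1 + q3) (min (q1 + q4) (min (q2 + q3)
    (min (q2 + q4) (q3 + q4))))) with hs
  have hv0 := I.inf_util_le a P 0
  have hv1 := I.inf_util_le a P 1
  have hv2 := I.inf_util_le a P 2
  have hsum3 := I.sum3_util_le a P hP
  rw [Fin.sum_univ_three] at hsum3
  -- helper for the split case
  have key1 : ∀ (g : Fin m), ¬ I.divisible a g → (∀ j, P j g ≠ 1) → m4 ≤ I.v a g →
      (⨅ j, I.util a (P j)) ≤ max ((T - m4) / 3) ((T - s) / 2) := by
    intro g hind hne hm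
    have hb := I.split_bound a g hind P hP hne
    rw [Fin.sum_univ_three] at hb
    refine le_trans ?_ (le_max_left _ _)
    linarith
  -- helper for the pair case
  have key2 : ∀ (x y : Fin m), x ≠ y → s ≤ I.v a x + I.v a y → ∀ js : Fin 3,
      P js x = 1 → P js y = 1 →
      (⨅ j, I.util a (P j)) ≤ max ((T - m4) / 3) ((T - s) / 2) := by
    intro x y hxy hsle js hx hy
    have hw := I.pair_whole a hxy P hP js hx hy
    refine le_trans ?_ (le_max_right _ _)
    fin_cases js
    · have hw' : I.v a x + I.v a y ≤ I.util a (P 0) := hw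
      linarith
    · have hw' : I.v a x + I.v a y ≤ I.util a (P 1) := hw
      linarith
    · have hw' : I.v a x + I.v a y ≤ I.util a (P 2) := hw
      linarith
  by_cases e1 : ∃ j, P j g1 = 1
  · by_cases e2 : ∃ j, P j g2 = 1
    · by_cases e3 : ∃ j, P j g3 = 1
      · by_cases e4 : ∃ j, P j g4 = 1
        · obtain ⟨j1, hj1⟩ := e1; obtain ⟨j2, hj2⟩ := e2
          obtain ⟨j3, hj3⟩ := e3; obtain ⟨j4, hj4⟩ := e4
          have hcol : j1.1 = j2.1 ∨ j1.1 = j3.1 ∨ j1.1 = j4.1 ∨ j2.1 = j3.1 ∨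
              j2.1 = j4.1 ∨ j3.1 = j4.1 := by omega
          have hs12 : s ≤ q1 + q2 := min_le_left _ _
          have hs13 : s ≤ q1 + q3 := le_trans (min_le_right _ _) (min_le_left _ _)
          have hs14 : s ≤ q1 + q4 :=
            le_trans (min_le_right _ _) (le_trans (min_le_right _ _) (min_le_left _ _))
          have hs23 : s ≤ q2 + q3 :=
            le_trans (min_le_right _ _) (le_trans (min_le_right _ _)
              (le_trans (min_le_right _ _) (min_le_left _ _)))
          have hs24 : s ≤ q2 + q4 :=
            le_trans (min_le_right _ _) (le_trans (min_le_right _ _)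
              (le_trans (min_le_right _ _) (le_trans (min_le_right _ _) (min_le_left _ _))))
          have hs34 : s ≤ q3 + q4 :=
            le_trans (min_le_right _ _) (le_trans (min_le_right _ _)
              (le_trans (min_le_right _ _) (le_trans (min_le_right _ _) (min_le_right _ _))))
          rcases hcol with h | h | h | h | h | h
          · exact key2 g1 g2 h12 hs12 j1 hj1 (by rwa [Fin.eq_of_val_eq h])
          · exact key2 g1 g3 h13 hs13 j1 hj1 (by rwa [Fin.eq_of_val_eq h])
          · exact key2 g1 g4 h14 hs14 j1 hj1 (by rwa [Fin.eq_of_val_eq h])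
          · exact key2 g2 g3 h23 hs23 j2 hj2 (by rwa [Fin.eq_of_val_eq h])
          · exact key2 g2 g4 h24 hs24 j2 hj2 (by rwa [Fin.eq_of_val_eq h])
          · exact key2 g3 g4 h34 hs34 j3 hj3 (by rwa [Fin.eq_of_val_eq h])
        · push_neg at e4
          exact key1 g4 hi4 e4 (le_trans (min_le_right _ _) (min_le_right _ _))
      · push_neg at e3
        exact key1 g3 hi3 e3 (le_trans (min_le_right _ _) (min_le_left _ _))
    · push_neg at e2
      exact key1 g2 hi2 e2 (le_trans (min_le_left _ _) (min_le_right _ _))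
  · push_neg at e1
    exact key1 g1 hi1 e1 (le_trans (min_le_left _ _) (min_le_left _ _))


/-- Part 1: every agent regards at most three goods of `M̂` as indivisible. -/
lemma at_most_three (I : FairDivision 3 m)
    (hNoHigh : ∀ a g, I.v a g < 2 / 3 * I.MMS a)
    (hNoRed : ∀ (B : Finset (Fin m)) (i : Fin 3), ¬ I.IsReducible B i) (a : Fin 3) :
    (Finset.univ.filter fun g =>
      (∀ b : Fin 3, I.MMS b / 3 < I.v b g) ∧ ¬ I.divisible a g).card ≤ 3 := by
  by_contra hcon
  push_neg at hcon
  obtain ⟨t, hts, htc⟩ := Finset.exists_subset_card_eq (show 4 ≤ _ from hcon)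
  obtain ⟨g1, hg1t⟩ := Finset.card_pos.mp (by omega : 0 < t.card)
  have hce : (t.erase g1).card = 3 := by rw [Finset.card_erase_of_mem hg1t, htc]
  obtain ⟨g2, g3, g4, h23, h24, h34, he⟩ := Finset.card_eq_three.mp hce
  have hg2e : g2 ∈ t.erase g1 := by rw [he]; simp
  have hg3e : g3 ∈ t.erase g1 := by rw [he]; simp
  have hg4e : g4 ∈ t.erase g1 := by rw [he]; simp
  have h12 : g1 ≠ g2 := ((Finset.mem_erase.mp hg2e).1).symm
  have h13 : g1 ≠ g3 := ((Finset.mem_erase.mp hg3e).1).symm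
  have h14 : g1 ≠ g4 := ((Finset.mem_erase.mp hg4e).1).symm
  have hp : ∀ x ∈ t, (∀ b : Fin 3, I.MMS b / 3 < I.v b x) ∧ ¬ I.divisible a x :=
    fun x hx => (Finset.mem_filter.mp (hts hx)).2
  have hp1 := hp g1 hg1t
  have hp2 := hp g2 (Finset.mem_of_mem_erase hg2e)
  have hp3 := hp g3 (Finset.mem_of_mem_erase hg3e)
  have hp4 := hp g4 (Finset.mem_of_mem_erase hg4e)
  have hpos := I.mms_pos hNoRed a
  have hTot := I.total_ge_mms a
  -- pair bounds (at agent a)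
  have hb12 := I.pair_big hNoHigh hNoRed h12 hp1.1 hp2.1 a
  have hb13 := I.pair_big hNoHigh hNoRed h13 hp1.1 hp3.1 a
  have hb14 := I.pair_big hNoHigh hNoRed h14 hp1.1 hp4.1 a
  have hb23 := I.pair_big hNoHigh hNoRed h23 hp2.1 hp3.1 a
  have hb24 := I.pair_big hNoHigh hNoRed h24 hp2.1 hp4.1 a
  have hb34 := I.pair_big hNoHigh hNoRed h34 hp3.1 hp4.1 a
  set T := ∑ x, I.v a x with hTdef
  set q1 := I.v a g1 with hq1
  set q2 := I.v a g2 with hq2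
  set q3 := I.v a g3 with hq3
  set q4 := I.v a g4 with hq4
  set m4 := min (min q1 q2) (min q3 q4) with hm4def
  set s := min (q1 + q2) (min (q1 + q3) (min (q1 + q4) (min (q2 + q3)
    (min (q2 + q4) (q3 + q4))))) with hsdef
  have hC : I.MMS a ≤ max ((T - m4) / 3) ((T - s) / 2) := by
    apply Real.sSup_le
    · rintro x ⟨P, hP, rfl⟩
      exact I.inf_le_C a h12 h13 h14 h23 h24 h34 hp1.2 hp2.2 hp3.2 hp4.2 P hP
    · have hm4le : m4 ≤ q1 := le_trans (min_le_left _ _) (min_le_left _ _)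
      have := hNoHigh a g1
      have h0 : 0 ≤ (T - m4) / 3 := by
        rw [hq1] at hm4le
        linarith
      exact le_trans h0 (le_max_left _ _)
  have hs_gt : T - 2 * I.MMS a < s := by
    rw [hsdef]
    exact lt_min hb12 (lt_min hb13 (lt_min hb14 (lt_min hb23 (lt_min hb24 hb34))))
  rcases le_max_iff.mp hC with hA | hB
  · rw [hm4def] at hA
    rcases min_choice (min q1 q2) (min q3 q4) with h | h <;> rw [h] at hA
    · rcases min_choice q1 q2 with h' | h' <;> rw [h'] at hA
      · have := hNoHigh a g2; linarith
      · have := hNoHigh a g1; linarith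
    · rcases min_choice q3 q4 with h' | h' <;> rw [h'] at hA
      · have := hNoHigh a g4; linarith
      · have := hNoHigh a g3; linarith
  · linarith


end FairDivision

/-- In a three-agent instance with no (2/3)-high-valued good and no reducible
bundle, letting `M̂ = {g : v_a(g) > MMS_a / 3 for every agent a}`, every agent regards at most
three goods of `M̂` as indivisible, and consequently some good of `M̂` is regarded as divisible
by at least two distinct agents. -/
theorem three_agent_common_divisible_good (m : ℕ) (I : FairDivision 3 m)
    (hNoHigh : ∀ a g, I.v a g < 2 / 3 * I.MMS a)
    (hNoRed : ∀ (B : Finset (Fin m)) (i : Fin 3), ¬ I.IsReducible B i) :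
    (∀ a : Fin 3,
      (Finset.univ.filter fun g =>
        (∀ b : Fin 3, I.MMS b / 3 < I.v b g) ∧ ¬ I.divisible a g).card ≤ 3) ∧
    (∃ g : Fin m, (∀ b : Fin 3, I.MMS b / 3 < I.v b g) ∧
      ∃ a a' : Fin 3, a ≠ a' ∧ I.divisible a g ∧ I.divisible a' g) := by

  refine ⟨I.at_most_three hNoHigh hNoRed, ?_⟩
  by_contra h2
  push_neg at h2
  have hpos := I.mms_pos hNoRed
  have hTot := I.total_ge_mms
  classical
  set Mhat := Finset.univ.filter (fun g => ∀ b : Fin 3, I.MMS b / 3 < I.v b g) with hMh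
  -- each good of Mhat is indivisible for at least two agents
  have htwo : ∀ g ∈ Mhat, 2 ≤ ∑ a : Fin 3, (if ¬ I.divisible a g then 1 else 0 : ℕ) := by
    intro g hg
    have hpred : ∀ b : Fin 3, I.MMS b / 3 < I.v b g := (Finset.mem_filter.mp hg).2
    have hnd : ∀ a a' : Fin 3, a ≠ a' → ¬ (I.divisible a g ∧ I.divisible a' g) := by
      intro a a' hne hcon
      exact (h2 g hpred a a' hne hcon.1) hcon.2
    have n01 := hnd 0 1 (by decide)
    have n02 := hnd 0 2 (by decide)
    have n12 := hnd 1 2 (by decide)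
    have key : (¬ I.divisible 0 g ∧ ¬ I.divisible 1 g) ∨
        (¬ I.divisible 0 g ∧ ¬ I.divisible 2 g) ∨
        (¬ I.divisible 1 g ∧ ¬ I.divisible 2 g) := by tauto
    rw [Fin.sum_univ_three]
    rcases key with ⟨u, v⟩ | ⟨u, v⟩ | ⟨u, v⟩ <;> rw [if_pos u, if_pos v] <;> omega
  -- counting: Mhat has at most 4 goods
  have hfilter : ∀ a : Fin 3, (Mhat.filter fun g => ¬ I.divisible a g) =
      (Finset.univ.filter fun g =>
        (∀ b : Fin 3, I.MMS b / 3 < I.v b g) ∧ ¬ I.divisible a g) := by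
    intro a
    rw [hMh, Finset.filter_filter]
  have hM4 : Mhat.card ≤ 4 := by
    have hsum : 2 * Mhat.card ≤ ∑ a : Fin 3, (Mhat.filter fun g => ¬ I.divisible a g).card := by
      calc 2 * Mhat.card = ∑ _g ∈ Mhat, 2 := by rw [Finset.sum_const, smul_eq_mul, mul_comm]
        _ ≤ ∑ g ∈ Mhat, ∑ a : Fin 3, (if ¬ I.divisible a g then 1 else 0 : ℕ) :=
            Finset.sum_le_sum htwo
        _ = ∑ a : Fin 3, ∑ g ∈ Mhat, (if ¬ I.divisible a g then 1 else 0 : ℕ) :=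
            Finset.sum_comm
        _ = ∑ a : Fin 3, (Mhat.filter fun g => ¬ I.divisible a g).card := by
            refine Finset.sum_congr rfl fun a _ => ?_
            rw [Finset.card_filter]
    have h0 := I.at_most_three hNoHigh hNoRed 0
    have h1 := I.at_most_three hNoHigh hNoRed 1
    have h2' := I.at_most_three hNoHigh hNoRed 2
    rw [Fin.sum_univ_three, hfilter 0, hfilter 1, hfilter 2] at hsum
    omega
  rcases Mhat.eq_empty_or_nonempty with hemp | ⟨a1, ha1⟩
  · -- Mhat empty: univ is non-small, its minimal non-small subset must lie in Mhat
    have hns : ¬ I.SmallB Finset.univ := by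
      intro hsm
      have := hsm 0
      linarith [hTot 0, hpos 0]
    obtain ⟨B, hBs, hBns, hBmin⟩ := I.exists_minimal_nonsmall _ hns
    have hf := I.frontier hNoHigh hNoRed B hBns hBmin
    rcases B.eq_empty_or_nonempty with rfl | ⟨g, hg⟩
    · exact hBns (I.small_empty hpos)
    · have hgM : g ∈ Mhat := by
        rw [hMh, Finset.mem_filter]
        exact ⟨Finset.mem_univ g, fun b => hf.2 g hg b⟩
      rw [hemp] at hgM
      exact absurd hgM (Finset.notMem_empty g)
  · -- Mhat nonempty with ≤ 4 goods
    have hMlt : ∀ b : Fin 3, ∑ g ∈ Mhat, I.v b g < 8 / 3 * I.MMS b := by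
      intro b
      have h1 : ∑ g ∈ Mhat, I.v b g < ∑ _g ∈ Mhat, 2 / 3 * I.MMS b :=
        Finset.sum_lt_sum_of_nonempty ⟨a1, ha1⟩ fun g _ => hNoHigh b g
      have h2' : ∑ _g ∈ Mhat, (2 / 3 * I.MMS b) = (Mhat.card : ℝ) * (2 / 3 * I.MMS b) := by
        rw [Finset.sum_const, nsmul_eq_mul]
      have h3 : (Mhat.card : ℝ) ≤ 4 := by exact_mod_cast hM4
      nlinarith [hpos b]
    have ha1n : a1 ∉ Mhatᶜ := by simp [ha1]
    set S := insert a1 Mhatᶜ with hSdef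
    have hSval : ∀ b : Fin 3, ∑ g ∈ S, I.v b g =
        I.v b a1 + ((∑ g, I.v b g) - ∑ g ∈ Mhat, I.v b g) := by
      intro b
      rw [hSdef, Finset.sum_insert ha1n]
      have := Finset.sum_add_sum_compl Mhat (I.v b)
      linarith
    have hSns : ¬ I.SmallB S := by
      intro hsm
      have h1 := hsm 0
      have h2' := hSval 0
      have hA1 : I.MMS 0 / 3 < I.v 0 a1 := (Finset.mem_filter.mp ha1).2 0
      linarith [hMlt 0, hTot 0]
    obtain ⟨B, hBs, hBns, hBmin⟩ := I.exists_minimal_nonsmall S hSns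
    have hf := I.frontier hNoHigh hNoRed B hBns hBmin
    have hsub : B ⊆ {a1} := by
      intro g hg
      have hgM : g ∈ Mhat := by
        rw [hMh, Finset.mem_filter]
        exact ⟨Finset.mem_univ g, fun b => hf.2 g hg b⟩
      have hgS : g ∈ S := hBs hg
      rw [hSdef] at hgS
      rcases Finset.mem_insert.mp hgS with rfl | hgc
      · exact Finset.mem_singleton_self g
      · exact absurd hgM (by simpa using hgc)
    have hsmall : I.SmallB B := by
      intro b
      have hle : ∑ g ∈ B, I.v b g ≤ ∑ g ∈ ({a1} : Finset (Fin m)), I.v b g :=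
        Finset.sum_le_sum_of_subset_of_nonneg hsub fun x _ _ => I.v_nonneg b x
      rw [Finset.sum_singleton] at hle
      linarith [hNoHigh b a1]
    exact hBns hsmall
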